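/- In the 4-player egalitarian construction, every envy-free complete connected division gives player 4 utility at most 1/4. -/
import Mathlib


open MeasureTheory Set
open scoped ENNReal

/-- A connected division of the cake `[0,1]` among `n` players: each player gets an
open interval, the intervals are pairwise disjoint and contained in `[0,1]`. -/
structure ConnDiv (n : ℕ) where
  pieces : Fin n → Set ℝ
  isInterval : ∀ i, ∃ a b : ℝ, pieces i = Set.Ioo a b
  subset : ∀ i, pieces i ⊆ Set.Icc (0:ℝ) 1
  disj : Pairwise fun i j => Disjoint (pieces i) (pieces j)

/-- A connected division is complete if the closures of the pieces cover `[0,1]`. -/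
def ConnDiv.Complete {n : ℕ} (d : ConnDiv n) : Prop :=
  Set.Icc (0:ℝ) 1 ⊆ ⋃ i, closure (d.pieces i)

/-- Envy-freeness: every player weakly prefers her own piece. -/
def EnvyFree {n : ℕ} (v : Fin n → Measure ℝ) (d : ConnDiv n) : Prop :=
  ∀ i j, v i (d.pieces j) ≤ v i (d.pieces i)

/-- Utilitarian welfare: sum of own-piece values. -/
noncomputable def util {n : ℕ} (v : Fin n → Measure ℝ) (d : ConnDiv n) : ℝ≥0∞ :=
  ∑ i, v i (d.pieces i)

/-- Egalitarian welfare: minimum own-piece value. -/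
noncomputable def egal {n : ℕ} (v : Fin n → Measure ℝ) (d : ConnDiv n) : ℝ≥0∞ :=
  ⨅ i, v i (d.pieces i)

/-- The uniform measure of total mass `m` on the interval `(a,b)`. -/
noncomputable def unifOn (a b m : ℝ) : Measure ℝ :=
  ENNReal.ofReal (m / (b - a)) • volume.restrict (Set.Ioo a b)

/- The 4-player egalitarian construction: the cake is split into 14 equal cells
`(k/14, (k+1)/14)`.  Main part: first block = cells 0–3, interval `I` = cell 4,
second block = cells 5–8, the interval following the second block = cell 9.
Last-player part: cells 10–13. -/

/-- Player 1: the second and fourth intervals of the first block, each of value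
`(1+ε)/4`, and an interval of value `(1-ε)/2` in the last-player part. -/
noncomputable def vP1 (ε : ℝ) : Measure ℝ :=
  unifOn (1/14) (2/14) ((1+ε)/4) + unifOn (3/14) (4/14) ((1+ε)/4) +
    unifOn (11/14) (12/14) ((1-ε)/2)

/-- Player 2: the second and fourth intervals of the second block, each of value
`(1+ε)/4`, and an interval of value `(1-ε)/2` in the last-player part. -/
noncomputable def vP2 (ε : ℝ) : Measure ℝ :=
  unifOn (6/14) (7/14) ((1+ε)/4) + unifOn (8/14) (9/14) ((1+ε)/4) +
    unifOn (12/14) (13/14) ((1-ε)/2)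

/-- Player 3: the third interval of each block, each of value `(1-ε)/3`, the
interval `I` of value `ε`, and the interval following the second block, of
value `(1-ε)/3`. -/
noncomputable def vP3 (ε : ℝ) : Measure ℝ :=
  unifOn (2/14) (3/14) ((1-ε)/3) + unifOn (4/14) (5/14) ε +
    unifOn (7/14) (8/14) ((1-ε)/3) + unifOn (9/14) (10/14) ((1-ε)/3)

/-- Player 4: the first interval of each block and the two outer intervals of
the last-player part, each of value `1/4`. -/
noncomputable def vP4 : Measure ℝ :=
  unifOn 0 (1/14) (1/4) + unifOn (5/14) (6/14) (1/4) +
    unifOn (10/14) (11/14) (1/4) + unifOn (13/14) 1 (1/4)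

noncomputable def vEg4 (ε : ℝ) : Fin 4 → Measure ℝ := ![vP1 ε, vP2 ε, vP3 ε, vP4]

/-! ### Auxiliary lemmas -/

noncomputable def LL (c e p q : ℝ) : ℝ := max 0 (min e q - max c p)

lemma LL_nonneg (c e p q : ℝ) : 0 ≤ LL c e p q := le_max_left _ _

lemma LL_le (c e p q : ℝ) (h : p ≤ q) : LL c e p q ≤ q - p := by
  unfold LL
  rcases le_total (min e q - max c p) 0 with h' | h'
  · rw [max_eq_left h']; linarith
  · rw [max_eq_right h']
    have h1 : min e q ≤ q := min_le_right _ _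
    have h2 : p ≤ max c p := le_max_right _ _
    linarith

lemma LL_pos {c e p q : ℝ} (h : 0 < LL c e p q) : c < q ∧ p < e ∧ c < e := by
  unfold LL at h
  rcases le_total (min e q - max c p) 0 with h' | h'
  · rw [max_eq_left h'] at h; exact absurd h (lt_irrefl _)
  · rw [max_eq_right h'] at h
    have h1 : max c p < min e q := by linarith
    have hc : c ≤ max c p := le_max_left _ _
    have hp : p ≤ max c p := le_max_right _ _
    have he : min e q ≤ e := min_le_left _ _
    have hq : min e q ≤ q := min_le_right _ _
    exact ⟨by linarith, by linarith, by linarith⟩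

lemma LL_zero {c e p q : ℝ} (h : LL c e p q = 0) : min e q ≤ max c p := by
  unfold LL at h
  rcases le_total (min e q - max c p) 0 with h' | h'
  · linarith
  · rw [max_eq_right h'] at h; linarith

lemma LL_full {c e p q : ℝ} (hc : c ≤ p) (he : q ≤ e) (hpq : p ≤ q) : LL c e p q = q - p := by
  unfold LL
  rw [min_eq_right he, max_eq_right hc, max_eq_right (by linarith)]

lemma LL_zero_right (c e p q : ℝ) (he : e ≤ p) : LL c e p q = 0 := by
  unfold LL
  have h1 : min e q ≤ e := min_le_left _ _
  have h2 : p ≤ max c p := le_max_right _ _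
  exact max_eq_left (by linarith)

lemma LL_zero_left (c e p q : ℝ) (hq : q ≤ c) : LL c e p q = 0 := by
  unfold LL
  have h1 : min e q ≤ q := min_le_right _ _
  have h2 : c ≤ max c p := le_max_left _ _
  exact max_eq_left (by linarith)

lemma LL_zero_of_disj {c e p q : ℝ} (h : Disjoint (Set.Ioo c e) (Set.Ioo p q)) :
    LL c e p q = 0 := by
  have := Set.Ioo_disjoint_Ioo.mp h
  exact max_eq_left (by linarith)

lemma min_switch {e K B : ℝ} (h : min e K ≤ B) (hBK : B < K) : e ≤ B := by
  rcases le_total e K with h' | h'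
  · rwa [min_eq_left h'] at h
  · rw [min_eq_right h'] at h; linarith

lemma max_switch {c K B : ℝ} (h : B ≤ max c K) (hKB : K < B) : B ≤ c := by
  rcases le_total c K with h' | h'
  · rw [max_eq_right h'] at h; linarith
  · rwa [max_eq_left h'] at h

lemma unifOn_Ioo {p q : ℝ} (m c e : ℝ) (hpq : p < q) (hm : 0 ≤ m) :
    unifOn p q m (Set.Ioo c e) = ENNReal.ofReal (m / (q - p) * LL c e p q) := by
  rw [unifOn, Measure.smul_apply, Measure.restrict_apply measurableSet_Ioo,
    Set.Ioo_inter_Ioo, Real.volume_Ioo, smul_eq_mul]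
  have hd : 0 ≤ m / (q - p) := div_nonneg hm (by linarith)
  unfold LL
  rcases le_total (min e q - max c p) 0 with h' | h'
  · rw [max_eq_left h', mul_zero, ENNReal.ofReal_zero, ENNReal.ofReal_eq_zero.2 h', mul_zero]
  · rw [max_eq_right h', ← ENNReal.ofReal_mul hd]

lemma ofReal_add3 {a b c : ℝ} (ha : 0 ≤ a) (hb : 0 ≤ b) (hc : 0 ≤ c) :
    ENNReal.ofReal a + ENNReal.ofReal b + ENNReal.ofReal c = ENNReal.ofReal (a + b + c) := by
  rw [← ENNReal.ofReal_add ha hb, ← ENNReal.ofReal_add (by linarith) hc]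

lemma ofReal_add4 {a b c d : ℝ} (ha : 0 ≤ a) (hb : 0 ≤ b) (hc : 0 ≤ c) (hd : 0 ≤ d) :
    ENNReal.ofReal a + ENNReal.ofReal b + ENNReal.ofReal c + ENNReal.ofReal d
      = ENNReal.ofReal (a + b + c + d) := by
  rw [← ENNReal.ofReal_add ha hb, ← ENNReal.ofReal_add (by linarith) hc,
    ← ENNReal.ofReal_add (by linarith) hd]

lemma vP1_Ioo (ε c e : ℝ) (h0 : 0 ≤ ε) (h1 : ε ≤ 1) :
    vP1 ε (Set.Ioo c e) = ENNReal.ofReal (7*(1+ε)/2 * LL c e (1/14) (2/14)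
      + 7*(1+ε)/2 * LL c e (3/14) (4/14) + 7*(1-ε) * LL c e (11/14) (12/14)) := by
  rw [vP1, Measure.add_apply, Measure.add_apply,
    unifOn_Ioo _ _ _ (by norm_num) (by linarith),
    unifOn_Ioo _ _ _ (by norm_num) (by linarith),
    unifOn_Ioo _ _ _ (by norm_num) (by linarith),
    ofReal_add3 (mul_nonneg (div_nonneg (by linarith) (by norm_num)) (LL_nonneg _ _ _ _))
      (mul_nonneg (div_nonneg (by linarith) (by norm_num)) (LL_nonneg _ _ _ _))
      (mul_nonneg (div_nonneg (by linarith) (by norm_num)) (LL_nonneg _ _ _ _))]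
  congr 1
  ring

lemma vP2_Ioo (ε c e : ℝ) (h0 : 0 ≤ ε) (h1 : ε ≤ 1) :
    vP2 ε (Set.Ioo c e) = ENNReal.ofReal (7*(1+ε)/2 * LL c e (6/14) (7/14)
      + 7*(1+ε)/2 * LL c e (8/14) (9/14) + 7*(1-ε) * LL c e (12/14) (13/14)) := by
  rw [vP2, Measure.add_apply, Measure.add_apply,
    unifOn_Ioo _ _ _ (by norm_num) (by linarith),
    unifOn_Ioo _ _ _ (by norm_num) (by linarith),
    unifOn_Ioo _ _ _ (by norm_num) (by linarith),
    ofReal_add3 (mul_nonneg (div_nonneg (by linarith) (by norm_num)) (LL_nonneg _ _ _ _))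
      (mul_nonneg (div_nonneg (by linarith) (by norm_num)) (LL_nonneg _ _ _ _))
      (mul_nonneg (div_nonneg (by linarith) (by norm_num)) (LL_nonneg _ _ _ _))]
  congr 1
  ring

lemma vP3_Ioo (ε c e : ℝ) (h0 : 0 ≤ ε) (h1 : ε ≤ 1) :
    vP3 ε (Set.Ioo c e) = ENNReal.ofReal (14*(1-ε)/3 * LL c e (2/14) (3/14)
      + 14*ε * LL c e (4/14) (5/14) + 14*(1-ε)/3 * LL c e (7/14) (8/14)
      + 14*(1-ε)/3 * LL c e (9/14) (10/14)) := by
  rw [vP3, Measure.add_apply, Measure.add_apply, Measure.add_apply,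
    unifOn_Ioo _ _ _ (by norm_num) (by linarith),
    unifOn_Ioo _ _ _ (by norm_num) (by linarith),
    unifOn_Ioo _ _ _ (by norm_num) (by linarith),
    unifOn_Ioo _ _ _ (by norm_num) (by linarith),
    ofReal_add4 (mul_nonneg (div_nonneg (by linarith) (by norm_num)) (LL_nonneg _ _ _ _))
      (mul_nonneg (div_nonneg (by linarith) (by norm_num)) (LL_nonneg _ _ _ _))
      (mul_nonneg (div_nonneg (by linarith) (by norm_num)) (LL_nonneg _ _ _ _))
      (mul_nonneg (div_nonneg (by linarith) (by norm_num)) (LL_nonneg _ _ _ _))]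
  congr 1
  ring

lemma vP4_Ioo (c e : ℝ) :
    vP4 (Set.Ioo c e) = ENNReal.ofReal (7/2 * LL c e 0 (1/14)
      + 7/2 * LL c e (5/14) (6/14) + 7/2 * LL c e (10/14) (11/14)
      + 7/2 * LL c e (13/14) 1) := by
  rw [vP4, Measure.add_apply, Measure.add_apply, Measure.add_apply,
    unifOn_Ioo _ _ _ (by norm_num) (by norm_num),
    unifOn_Ioo _ _ _ (by norm_num) (by norm_num),
    unifOn_Ioo _ _ _ (by norm_num) (by norm_num),
    unifOn_Ioo _ _ _ (by norm_num) (by norm_num),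
    ofReal_add4 (mul_nonneg (by norm_num) (LL_nonneg _ _ _ _))
      (mul_nonneg (by norm_num) (LL_nonneg _ _ _ _))
      (mul_nonneg (by norm_num) (LL_nonneg _ _ _ _))
      (mul_nonneg (by norm_num) (LL_nonneg _ _ _ _))]
  congr 1
  ring

lemma two_halves {ε : ℝ} (hε : 0 < ε) {u v : ℝ≥0∞}
    (hu : ENNReal.ofReal ((1+ε)/2) ≤ u) (hv : ENNReal.ofReal ((1+ε)/2) ≤ v)
    (hs : u + v ≤ ENNReal.ofReal 1) : False := by
  have h := le_trans (add_le_add hu hv) hs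
  rw [← ENNReal.ofReal_add (by linarith) (by linarith)] at h
  have := (ENNReal.ofReal_le_ofReal_iff (by norm_num)).mp h
  linarith

set_option maxHeartbeats 4000000 in
/-- In every envy-free complete connected division of the 4-player egalitarian
construction, player 4 gets utility at most `1/4`. -/
theorem player4_at_most_quarter (ε : ℝ) (hε : 0 < ε) (hε' : ε < 1/100)
    (d : ConnDiv 4) (hc : d.Complete) (hEF : EnvyFree (vEg4 ε) d) :
    vEg4 ε 3 (d.pieces 3) ≤ 1/4 := by
  obtain ⟨a1, b1, h1⟩ := d.isInterval 0
  obtain ⟨a2, b2, h2⟩ := d.isInterval 1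
  obtain ⟨a3, b3, h3⟩ := d.isInterval 2
  obtain ⟨a4, b4, h4⟩ := d.isInterval 3
  by_contra hcon
  push_neg at hcon
  have hcon2 : (1/4 : ℝ≥0∞) < vP4 (Set.Ioo a4 b4) := by rw [← h4]; exact hcon
  have hq14 : (1/4 : ℝ≥0∞) = ENNReal.ofReal (1/4 : ℝ) := by
    rw [ENNReal.ofReal_div_of_pos (by norm_num)]; norm_num
  rw [vP4_Ioo, hq14] at hcon2
  have hX : (1/4 : ℝ) < 7/2 * LL a4 b4 0 (1/14) + 7/2 * LL a4 b4 (5/14) (6/14)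
      + 7/2 * LL a4 b4 (10/14) (11/14) + 7/2 * LL a4 b4 (13/14) 1 :=
    (ENNReal.ofReal_lt_ofReal_iff_of_nonneg (by norm_num)).mp hcon2
  have hsubIoo : ∀ i : Fin 4, d.pieces i ⊆ Set.Ioo (-1 : ℝ) 2 := fun i =>
    (d.subset i).trans (Set.Icc_subset_Ioo (by norm_num) (by norm_num))
  -- case split on which v4-cells piece 4 touches
  rcases (LL_nonneg a4 b4 0 (1/14)).lt_or_eq with hpos0 | hzero0
  · -- Case A : piece 4 touches cell 0, hence spans (1/14, 5/14)
    obtain ⟨hA1, hA2, hA3⟩ := LL_pos hpos0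
    have hb4 : 5/14 ≤ b4 := by
      by_contra h
      push_neg at h
      rw [LL_zero_right a4 b4 (5/14) (6/14) (by linarith),
        LL_zero_right a4 b4 (10/14) (11/14) (by linarith),
        LL_zero_right a4 b4 (13/14) 1 (by linarith)] at hX
      have := LL_le a4 b4 0 (1/14) (by norm_num)
      linarith
    have k1 : ENNReal.ofReal ((1+ε)/2) ≤ vP1 ε (d.pieces 3) := by
      rw [h4]
      calc ENNReal.ofReal ((1+ε)/2) = vP1 ε (Set.Ioo (1/14) (5/14)) := by
            rw [vP1_Ioo _ _ _ hε.le (by linarith)]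
            congr 1
            norm_num [LL, min_def, max_def]
            ring
        _ ≤ vP1 ε (Set.Ioo a4 b4) :=
            measure_mono (Set.Ioo_subset_Ioo (by linarith) (by linarith))
    have k2 : ENNReal.ofReal ((1+ε)/2) ≤ vP1 ε (d.pieces 0) := k1.trans (hEF 0 3)
    have hsum : vP1 ε (d.pieces 0) + vP1 ε (d.pieces 3) ≤ ENNReal.ofReal 1 := by
      calc vP1 ε (d.pieces 0) + vP1 ε (d.pieces 3)
          = vP1 ε (d.pieces 0 ∪ d.pieces 3) :=
            (measure_union (d.disj (show (0:Fin 4) ≠ 3 by decide))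
              (h4 ▸ measurableSet_Ioo)).symm
        _ ≤ vP1 ε (Set.Ioo (-1) 2) :=
            measure_mono (Set.union_subset (hsubIoo 0) (hsubIoo 3))
        _ = ENNReal.ofReal 1 := by
            rw [vP1_Ioo _ _ _ hε.le (by linarith)]
            congr 1
            norm_num [LL, min_def, max_def]
            ring
    exact two_halves hε k2 k1 hsum
  · rcases (LL_nonneg a4 b4 (5/14) (6/14)).lt_or_eq with hpos5 | hzero5
    · -- Case B : piece 4 touches cell 5 (and not cell 0), hence spans (6/14, 10/14)
      obtain ⟨hB1, hB2, hB3⟩ := LL_pos hpos5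
      have hb4 : 10/14 ≤ b4 := by
        by_contra h
        push_neg at h
        rw [← hzero0, LL_zero_right a4 b4 (10/14) (11/14) (by linarith),
          LL_zero_right a4 b4 (13/14) 1 (by linarith)] at hX
        have := LL_le a4 b4 (5/14) (6/14) (by norm_num)
        linarith
      have k1 : ENNReal.ofReal ((1+ε)/2) ≤ vP2 ε (d.pieces 3) := by
        rw [h4]
        calc ENNReal.ofReal ((1+ε)/2) = vP2 ε (Set.Ioo (6/14) (10/14)) := by
              rw [vP2_Ioo _ _ _ hε.le (by linarith)]
              congr 1
              norm_num [LL, min_def, max_def]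
              ring
          _ ≤ vP2 ε (Set.Ioo a4 b4) :=
              measure_mono (Set.Ioo_subset_Ioo (by linarith) (by linarith))
      have k2 : ENNReal.ofReal ((1+ε)/2) ≤ vP2 ε (d.pieces 1) := k1.trans (hEF 1 3)
      have hsum : vP2 ε (d.pieces 1) + vP2 ε (d.pieces 3) ≤ ENNReal.ofReal 1 := by
        calc vP2 ε (d.pieces 1) + vP2 ε (d.pieces 3)
            = vP2 ε (d.pieces 1 ∪ d.pieces 3) :=
              (measure_union (d.disj (show (1:Fin 4) ≠ 3 by decide))
                (h4 ▸ measurableSet_Ioo)).symm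
          _ ≤ vP2 ε (Set.Ioo (-1) 2) :=
              measure_mono (Set.union_subset (hsubIoo 1) (hsubIoo 3))
          _ = ENNReal.ofReal 1 := by
              rw [vP2_Ioo _ _ _ hε.le (by linarith)]
              congr 1
              norm_num [LL, min_def, max_def]
              ring
      exact two_halves hε k2 k1 hsum
    · -- Case C : piece 4 touches only cells 10 and 13, hence contains (11/14, 13/14)
      have h13le := LL_le a4 b4 (13/14) 1 (by norm_num)
      have h10le := LL_le a4 b4 (10/14) (11/14) (by norm_num)
      have hpos10 : 0 < LL a4 b4 (10/14) (11/14) := by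
        rcases (LL_nonneg a4 b4 (10/14) (11/14)).lt_or_eq with h | h
        · exact h
        · exfalso; rw [← hzero0, ← hzero5, ← h] at hX; linarith
      have hpos13 : 0 < LL a4 b4 (13/14) 1 := by
        rcases (LL_nonneg a4 b4 (13/14) 1).lt_or_eq with h | h
        · exact h
        · exfalso; rw [← hzero0, ← hzero5, ← h] at hX; linarith
      obtain ⟨hc10, hd10, _⟩ := LL_pos hpos10
      obtain ⟨hc13, hd13, _⟩ := LL_pos hpos13
      have ha46 : 6/14 ≤ a4 := by
        have hz := LL_zero hzero5.symm
        rw [min_eq_right (by linarith : (6:ℝ)/14 ≤ b4)] at hz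
        exact max_switch hz (by norm_num)
      -- player 1 must span cell 2
      have k1 : ENNReal.ofReal ((1-ε)/2) ≤ vP1 ε (d.pieces 0) := by
        calc ENNReal.ofReal ((1-ε)/2) = vP1 ε (Set.Ioo (11/14) (12/14)) := by
              rw [vP1_Ioo _ _ _ hε.le (by linarith)]
              congr 1
              norm_num [LL, min_def, max_def]
              ring
          _ ≤ vP1 ε (Set.Ioo a4 b4) :=
              measure_mono (Set.Ioo_subset_Ioo (by linarith) (by linarith))
          _ = vP1 ε (d.pieces 3) := by rw [h4]
          _ ≤ vP1 ε (d.pieces 0) := hEF 0 3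
      have hd04 : Disjoint (Set.Ioo a1 b1) (Set.Ioo a4 b4) := by
        rw [← h1, ← h4]; exact d.disj (show (0:Fin 4) ≠ 3 by decide)
      have hL1c : LL a1 b1 (11/14) (12/14) = 0 :=
        LL_zero_of_disj (hd04.mono_right (Set.Ioo_subset_Ioo (by linarith) (by linarith)))
      have hX1 : (1-ε)/2 ≤ 7*(1+ε)/2 * LL a1 b1 (1/14) (2/14)
          + 7*(1+ε)/2 * LL a1 b1 (3/14) (4/14) := by
        rw [h1, vP1_Ioo _ _ _ hε.le (by linarith), hL1c, mul_zero, add_zero] at k1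
        rcases ENNReal.ofReal_le_ofReal_iff'.mp k1 with h | h
        · exact h
        · linarith
      have hLA1 : 0 < LL a1 b1 (1/14) (2/14) := by
        rcases (LL_nonneg a1 b1 (1/14) (2/14)).lt_or_eq with h | h
        · exact h
        · exfalso
          have hb := mul_le_mul_of_nonneg_left (LL_le a1 b1 (3/14) (4/14) (by norm_num))
            (show (0:ℝ) ≤ 7*(1+ε)/2 by linarith)
          rw [← h] at hX1
          linarith
      have hLB1 : 0 < LL a1 b1 (3/14) (4/14) := by
        rcases (LL_nonneg a1 b1 (3/14) (4/14)).lt_or_eq with h | h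
        · exact h
        · exfalso
          have hb := mul_le_mul_of_nonneg_left (LL_le a1 b1 (1/14) (2/14) (by norm_num))
            (show (0:ℝ) ≤ 7*(1+ε)/2 by linarith)
          rw [← h] at hX1
          linarith
      obtain ⟨ha1, hb1', hab1⟩ := LL_pos hLA1
      obtain ⟨ha1', hb1, _⟩ := LL_pos hLB1
      -- player 2 must span cell 7
      have k2 : ENNReal.ofReal ((1-ε)/2) ≤ vP2 ε (d.pieces 1) := by
        calc ENNReal.ofReal ((1-ε)/2) = vP2 ε (Set.Ioo (12/14) (13/14)) := by
              rw [vP2_Ioo _ _ _ hε.le (by linarith)]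
              congr 1
              norm_num [LL, min_def, max_def]
              ring
          _ ≤ vP2 ε (Set.Ioo a4 b4) :=
              measure_mono (Set.Ioo_subset_Ioo (by linarith) (by linarith))
          _ = vP2 ε (d.pieces 3) := by rw [h4]
          _ ≤ vP2 ε (d.pieces 1) := hEF 1 3
      have hd14 : Disjoint (Set.Ioo a2 b2) (Set.Ioo a4 b4) := by
        rw [← h2, ← h4]; exact d.disj (show (1:Fin 4) ≠ 3 by decide)
      have hL2c : LL a2 b2 (12/14) (13/14) = 0 :=
        LL_zero_of_disj (hd14.mono_right (Set.Ioo_subset_Ioo (by linarith) (by linarith)))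
      have hX2 : (1-ε)/2 ≤ 7*(1+ε)/2 * LL a2 b2 (6/14) (7/14)
          + 7*(1+ε)/2 * LL a2 b2 (8/14) (9/14) := by
        rw [h2, vP2_Ioo _ _ _ hε.le (by linarith), hL2c, mul_zero, add_zero] at k2
        rcases ENNReal.ofReal_le_ofReal_iff'.mp k2 with h | h
        · exact h
        · linarith
      have hLA2 : 0 < LL a2 b2 (6/14) (7/14) := by
        rcases (LL_nonneg a2 b2 (6/14) (7/14)).lt_or_eq with h | h
        · exact h
        · exfalso
          have hb := mul_le_mul_of_nonneg_left (LL_le a2 b2 (8/14) (9/14) (by norm_num))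
            (show (0:ℝ) ≤ 7*(1+ε)/2 by linarith)
          rw [← h] at hX2
          linarith
      have hLB2 : 0 < LL a2 b2 (8/14) (9/14) := by
        rcases (LL_nonneg a2 b2 (8/14) (9/14)).lt_or_eq with h | h
        · exact h
        · exfalso
          have hb := mul_le_mul_of_nonneg_left (LL_le a2 b2 (6/14) (7/14) (by norm_num))
            (show (0:ℝ) ≤ 7*(1+ε)/2 by linarith)
          rw [← h] at hX2
          linarith
      obtain ⟨ha2, hb2', hab2⟩ := LL_pos hLA2
      obtain ⟨ha2', hb2, _⟩ := LL_pos hLB2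
      -- player 3 values piece 1 and piece 2 at least (1-ε)/3
      have k3a : ENNReal.ofReal ((1-ε)/3) ≤ vP3 ε (d.pieces 0) := by
        calc ENNReal.ofReal ((1-ε)/3) = vP3 ε (Set.Ioo (2/14) (3/14)) := by
              rw [vP3_Ioo _ _ _ hε.le (by linarith)]
              congr 1
              norm_num [LL, min_def, max_def]
              ring
          _ ≤ vP3 ε (Set.Ioo a1 b1) :=
              measure_mono (Set.Ioo_subset_Ioo (by linarith) (by linarith))
          _ = vP3 ε (d.pieces 0) := by rw [h1]
      have k3 : ENNReal.ofReal ((1-ε)/3) ≤ vP3 ε (d.pieces 2) := k3a.trans (hEF 2 0)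
      -- piece 3 analysis
      have hd20 : Disjoint (Set.Ioo a3 b3) (Set.Ioo a1 b1) := by
        rw [← h3, ← h1]; exact d.disj (show (2:Fin 4) ≠ 0 by decide)
      have hd21 : Disjoint (Set.Ioo a3 b3) (Set.Ioo a2 b2) := by
        rw [← h3, ← h2]; exact d.disj (show (2:Fin 4) ≠ 1 by decide)
      have hM2 : LL a3 b3 (2/14) (3/14) = 0 :=
        LL_zero_of_disj (hd20.mono_right (Set.Ioo_subset_Ioo (by linarith) (by linarith)))
      have hM7 : LL a3 b3 (7/14) (8/14) = 0 :=
        LL_zero_of_disj (hd21.mono_right (Set.Ioo_subset_Ioo (by linarith) (by linarith)))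
      have hX3 : (1-ε)/3 ≤ 14*ε * LL a3 b3 (4/14) (5/14)
          + 14*(1-ε)/3 * LL a3 b3 (9/14) (10/14) := by
        rw [h3, vP3_Ioo _ _ _ hε.le (by linarith), hM2, hM7] at k3
        simp only [mul_zero, zero_add, add_zero] at k3
        rcases ENNReal.ofReal_le_ofReal_iff'.mp k3 with h | h
        · linarith
        · linarith
      have hM9 : 0 < LL a3 b3 (9/14) (10/14) := by
        rcases (LL_nonneg a3 b3 (9/14) (10/14)).lt_or_eq with h | h
        · exact h
        · exfalso
          have hb := mul_le_mul_of_nonneg_left (LL_le a3 b3 (4/14) (5/14) (by norm_num))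
            (show (0:ℝ) ≤ 14*ε by linarith)
          rw [← h] at hX3
          linarith
      obtain ⟨ha3', hb3, hab3⟩ := LL_pos hM9
      have ha3 : 8/14 ≤ a3 := by
        have hd := Set.Ioo_disjoint_Ioo.mp hd21.symm
        have hmin : (8:ℝ)/14 < min b2 b3 := lt_min (by linarith) (by linarith)
        have hmax : (8:ℝ)/14 < max a2 a3 := lt_of_lt_of_le hmin hd
        rcases le_total a2 a3 with h | h
        · rw [max_eq_right h] at hmax; linarith
        · rw [max_eq_left h] at hmax; linarith
      -- piece 3 is worth at most (1-ε)/3 to player 3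
      have hM4 : LL a3 b3 (4/14) (5/14) = 0 := LL_zero_left _ _ _ _ (by linarith)
      have hup : vP3 ε (d.pieces 2) ≤ ENNReal.ofReal ((1-ε)/3) := by
        rw [h3, vP3_Ioo _ _ _ hε.le (by linarith), hM2, hM7, hM4]
        simp only [mul_zero, zero_add, add_zero]
        apply ENNReal.ofReal_le_ofReal
        have hb := mul_le_mul_of_nonneg_left (LL_le a3 b3 (9/14) (10/14) (by norm_num))
          (show (0:ℝ) ≤ 14*(1-ε)/3 by linarith)
        linarith
      -- hence pieces 1 and 2 avoid interval I = cell 4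
      have hN1 : LL a1 b1 (2/14) (3/14) = 1/14 := by
        rw [LL_full (by linarith) (by linarith) (by norm_num)]; norm_num
      have hb14 : b1 ≤ 4/14 := by
        have k : vP3 ε (d.pieces 0) ≤ ENNReal.ofReal ((1-ε)/3) := (hEF 2 0).trans hup
        rw [h1, vP3_Ioo _ _ _ hε.le (by linarith), hN1] at k
        have hn7 : 0 ≤ 14*(1-ε)/3 * LL a1 b1 (7/14) (8/14) :=
          mul_nonneg (by linarith) (LL_nonneg _ _ _ _)
        have hn9 : 0 ≤ 14*(1-ε)/3 * LL a1 b1 (9/14) (10/14) :=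
          mul_nonneg (by linarith) (LL_nonneg _ _ _ _)
        have hn4 : 0 ≤ LL a1 b1 (4/14) (5/14) := LL_nonneg _ _ _ _
        have hN4 : LL a1 b1 (4/14) (5/14) = 0 := by
          by_contra hne
          have hp : 0 < 14*ε * LL a1 b1 (4/14) (5/14) :=
            mul_pos (by linarith) (lt_of_le_of_ne hn4 (Ne.symm hne))
          rcases ENNReal.ofReal_le_ofReal_iff'.mp k with h | h
          · linarith
          · linarith
        have hz := LL_zero hN4
        rw [max_eq_right (by linarith : a1 ≤ (4:ℝ)/14)] at hz
        exact min_switch hz (by norm_num)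
      have hN2 : LL a2 b2 (7/14) (8/14) = 1/14 := by
        rw [LL_full (by linarith) (by linarith) (by norm_num)]; norm_num
      have ha25 : 5/14 ≤ a2 := by
        have k : vP3 ε (d.pieces 1) ≤ ENNReal.ofReal ((1-ε)/3) := (hEF 2 1).trans hup
        rw [h2, vP3_Ioo _ _ _ hε.le (by linarith), hN2] at k
        have hn2 : 0 ≤ 14*(1-ε)/3 * LL a2 b2 (2/14) (3/14) :=
          mul_nonneg (by linarith) (LL_nonneg _ _ _ _)
        have hn9 : 0 ≤ 14*(1-ε)/3 * LL a2 b2 (9/14) (10/14) :=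
          mul_nonneg (by linarith) (LL_nonneg _ _ _ _)
        have hn4 : 0 ≤ LL a2 b2 (4/14) (5/14) := LL_nonneg _ _ _ _
        have hN4 : LL a2 b2 (4/14) (5/14) = 0 := by
          by_contra hne
          have hp : 0 < 14*ε * LL a2 b2 (4/14) (5/14) :=
            mul_pos (by linarith) (lt_of_le_of_ne hn4 (Ne.symm hne))
          rcases ENNReal.ofReal_le_ofReal_iff'.mp k with h | h
          · linarith
          · linarith
        have hz := LL_zero hN4
        rw [min_eq_right (by linarith : (5:ℝ)/14 ≤ b2)] at hz
        exact max_switch hz (by norm_num)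
      -- completeness fails at the point 9/28
      have ht : (9/28 : ℝ) ∈ ⋃ i, closure (d.pieces i) := hc ⟨by norm_num, by norm_num⟩
      obtain ⟨i, hi⟩ := Set.mem_iUnion.mp ht
      fin_cases i
      · have hi' : (9/28 : ℝ) ∈ Set.Icc a1 b1 := by
          rw [← closure_Ioo (show a1 ≠ b1 by linarith), ← h1]; exact hi
        have := hi'.2; linarith
      · have hi' : (9/28 : ℝ) ∈ Set.Icc a2 b2 := by
          rw [← closure_Ioo (show a2 ≠ b2 by linarith), ← h2]; exact hi
        have := hi'.1; linarith
      · have hi' : (9/28 : ℝ) ∈ Set.Icc a3 b3 := by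
          rw [← closure_Ioo (show a3 ≠ b3 by linarith), ← h3]; exact hi
        have := hi'.1; linarith
      · have hi' : (9/28 : ℝ) ∈ Set.Icc a4 b4 := by
          rw [← closure_Ioo (show a4 ≠ b4 by linarith), ← h4]; exact hi
        have := hi'.1; linarith
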